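/- Let E be a Dedekind complete vector lattice, F a universal completion of E, (P_γ)_{γ∈Γ} a net of band projections on E with P_γ ↑ I, and (x_α)_{α∈A} a net in E. If for each γ the net (P_γ x_α)_{α∈A} is order convergent in E, then (x_α)_{α∈A} is uo-convergent in F. -/

import Mathlib

universe u

/-- A net `(x_a)_{a ∈ A}` in a vector lattice `E` order converges to `l` if there is a
net `(y_b)_{b ∈ B}` decreasing to `0` such that for every `b` there is `a₀` with
`|x_a - l| ≤ y_b` for all `a ≥ a₀`. -/
def OrderConvNet {E : Type u} [Lattice E] [AddCommGroup E] {A : Type*} [Preorder A]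
    (x : A → E) (l : E) : Prop :=
  ∃ (B : Type u) (leB : B → B → Prop) (y : B → E),
    Nonempty B ∧
    (∀ b, leB b b) ∧
    (∀ b₁ b₂ b₃, leB b₁ b₂ → leB b₂ b₃ → leB b₁ b₃) ∧
    (∀ b₁ b₂, ∃ b₃, leB b₁ b₃ ∧ leB b₂ b₃) ∧
    (∀ b₁ b₂, leB b₁ b₂ → y b₂ ≤ y b₁) ∧
    IsGLB (Set.range y) 0 ∧
    (∀ b, ∃ a₀, ∀ a, a₀ ≤ a → |x a - l| ≤ y b)

/-- `E` is Dedekind complete: every nonempty subset bounded above has a supremum. -/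
def DedekindComplete (E : Type*) [Lattice E] : Prop :=
  ∀ S : Set E, S.Nonempty → BddAbove S → ∃ s, IsLUB S s

/-- `E` is laterally complete: every set of pairwise disjoint positive elements has a
supremum. -/
def LaterallyComplete (E : Type*) [Lattice E] [AddCommGroup E] : Prop :=
  ∀ S : Set E, (∀ x ∈ S, 0 ≤ x) → (S.Pairwise fun a b => a ⊓ b = 0) → ∃ s, IsLUB S s

/-- `P` is a band projection on the vector lattice `E`. -/
def IsBandProjection {E : Type*} [Lattice E] [AddCommGroup E] [Module ℝ E]
    (P : E →ₗ[ℝ] E) : Prop :=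
  (∀ x, P (P x) = P x) ∧ ∀ x : E, 0 ≤ x → 0 ≤ P x ∧ P x ≤ x

/-- A net `(x_a)` in a vector lattice converges in unbounded order (uo-converges) to `l`
if `|x_a - l| ⊓ w` order converges to `0` for every `w ∈ E⁺`. -/
def UoConvNet {E : Type u} [Lattice E] [AddCommGroup E] {A : Type*} [Preorder A]
    (x : A → E) (l : E) : Prop :=
  ∀ w : E, 0 ≤ w → OrderConvNet (fun a => |x a - l| ⊓ w) (0 : E)

/-!
Let `l γ` be the order limit of `P γ x_α`. Since `P γ P γ' = P γ` for `γ ≤ γ'` and order limits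
are unique, `P γ (l γ') = l γ`; hence `(l γ)⁺` and `(l γ)⁻` increase with increments disjoint
from the earlier terms. In the universally complete `F` such nets have suprema (a maximal
disjoint family, Riesz components and lateral completeness), and the difference `y` of the two
suprema coincides with `l γ` on each band `P γ E`.

Fix `w ≥ 0` and let `r γ` be the largest element of `[0, w]` disjoint from `P γ E`. Splitting
`x_α - y = (P γ x_α - l γ) + ((x_α - P γ x_α) - (y - l γ))`, the second summand is disjoint from
`P γ E`, so `|x_α - y| ⊓ w` is eventually below `c + r γ` whenever `c` eventually bounds
`|P γ x_α - l γ|`. A lower bound `m` of all eventual bounds of `|x_α - y| ⊓ w` therefore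
satisfies `m ≤ r γ` for every `γ`; so `m⁺` is disjoint from every `P γ E`, hence from `E`
because `P γ ↑ I`, and `m⁺ = 0` because `E` is order dense in `F`.
-/

lemma inf_eq_zero_of_le {α : Type*} [Lattice α] [Zero α] {a b c : α} (ha : 0 ≤ a)
    (hc : 0 ≤ c) (hab : a ≤ b) (hbc : b ⊓ c = 0) : a ⊓ c = 0 :=
  le_antisymm (hbc ▸ inf_le_inf_right c hab) (le_inf ha hc)

section LatticeOrderedGroup

variable {α : Type*} [Lattice α] [AddCommGroup α] [AddLeftMono α] {a b c : α}

lemma add_eq_sup_of_inf_eq_zero (h : a ⊓ b = 0) : a + b = a ⊔ b := by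
  rw [← inf_add_sup a b, h, zero_add]

lemma add_inf_le_inf_add_inf (ha : 0 ≤ a) (hb : 0 ≤ b) (hc : 0 ≤ c) :
    (a + b) ⊓ c ≤ a ⊓ c + b ⊓ c := by
  set t := (a + b) ⊓ c
  have hsub : t - a ⊓ c = (t - a) ⊔ (t - c) := by
    rw [sub_eq_add_neg, neg_inf, add_sup, ← sub_eq_add_neg, ← sub_eq_add_neg]
  have hta : t - a ≤ b ⊓ c :=
    le_inf (sub_le_iff_le_add'.mpr inf_le_left)
      (sub_le_iff_le_add.mpr (inf_le_right.trans (le_add_of_nonneg_right ha)))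
  have htc : t - c ≤ b ⊓ c := (sub_nonpos.mpr inf_le_right).trans (le_inf hb hc)
  exact sub_le_iff_le_add'.mp (hsub ▸ sup_le hta htc)

lemma add_inf_eq_zero (ha : 0 ≤ a) (hb : 0 ≤ b) (hc : 0 ≤ c) (hac : a ⊓ c = 0)
    (hbc : b ⊓ c = 0) : (a + b) ⊓ c = 0 := by
  refine le_antisymm ?_ (le_inf (add_nonneg ha hb) hc)
  simpa [hac, hbc] using add_inf_le_inf_add_inf ha hb hc

lemma nsmul_inf_eq_zero (ha : 0 ≤ a) (hb : 0 ≤ b) (hab : a ⊓ b = 0) (n : ℕ) :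
    (n • a) ⊓ b = 0 := by
  induction n with
  | zero => simpa using inf_of_le_left hb
  | succ n ih => rw [succ_nsmul]; exact add_inf_eq_zero (nsmul_nonneg ha n) ha hb ih hab

lemma eq_zero_of_abs_nonpos (h : |a| ≤ 0) : a = 0 :=
  le_antisymm ((le_abs_self a).trans h) (neg_nonpos.mp ((neg_le_abs a).trans h))

lemma abs_sub_le_abs_add_abs (a b : α) : |a - b| ≤ |a| + |b| := by
  simpa [sub_eq_add_neg] using abs_add_le a (-b)

lemma abs_sub_inf_eq_zero (hc : 0 ≤ c) (hac : |a| ⊓ c = 0) (hbc : |b| ⊓ c = 0) :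
    |a - b| ⊓ c = 0 :=
  inf_eq_zero_of_le (abs_nonneg _) hc (abs_sub_le_abs_add_abs a b)
    (add_inf_eq_zero (abs_nonneg a) (abs_nonneg b) hc hac hbc)

lemma posPart_sub_of_inf_eq_zero (hab : a ⊓ b = 0) : (a - b)⁺ = a := by
  rw [posPart_def, ← sub_self b, ← sup_sub, ← add_eq_sup_of_inf_eq_zero hab,
    add_sub_cancel_right]

lemma add_le_of_inf_eq_zero (hab : a ⊓ b = 0) (ha : a ≤ c) (hb : b ≤ c) : a + b ≤ c :=
  add_eq_sup_of_inf_eq_zero hab ▸ sup_le ha hb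

lemma IsLUB.image_inf {S : Set α} {p : α} (h : IsLUB S p) (w : α) :
    IsLUB ((· ⊓ w) '' S) (p ⊓ w) := by
  refine ⟨Set.forall_mem_image.mpr fun s hs => inf_le_inf_right w (h.1 hs), fun c hc => ?_⟩
  have hbound : ∀ s ∈ S, s ≤ c + (p ⊔ w) - w := fun s hs => by
    refine le_sub_iff_add_le.mpr ?_
    rw [← inf_add_sup s w]
    exact add_le_add (hc ⟨s, hs, rfl⟩) (sup_le_sup_right (h.1 hs) w)
  rw [eq_sub_of_add_eq (inf_add_sup p w)]
  exact sub_le_iff_le_add.mpr (le_sub_iff_add_le.mp (h.2 hbound))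

lemma inf_eq_zero_of_isLUB {S : Set α} {p w : α} (h : IsLUB S p) (hp : 0 ≤ p) (hw : 0 ≤ w)
    (hSw : ∀ s ∈ S, s ⊓ w = 0) : p ⊓ w = 0 :=
  le_antisymm ((h.image_inf w).2 (Set.forall_mem_image.mpr fun s hs => (hSw s hs).le))
    (le_inf hp hw)

end LatticeOrderedGroup

lemma exists_maximal_pairwise_inf_eq_zero {α : Type*} [Lattice α] [Zero α] (T : Set α) :
    ∃ M ⊆ T, M.Pairwise (fun a b => a ⊓ b = 0) ∧
      ∀ t ∈ T, t ≠ 0 → ∃ m ∈ M, t ⊓ m ≠ 0 := by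
  obtain ⟨M, hM⟩ := zorn_subset {M | M ⊆ T ∧ M.Pairwise (fun a b => a ⊓ b = 0)}
    fun c hc hchain => ⟨⋃₀ c, ⟨Set.sUnion_subset fun s hs => (hc hs).1,
      (Set.pairwise_sUnion hchain.directedOn).mpr fun s hs => (hc hs).2⟩,
      fun _ => Set.subset_sUnion_of_mem⟩
  refine ⟨M, hM.prop.1, hM.prop.2, fun t ht ht0 => ?_⟩
  by_contra! hdisj
  have hins : insert t M ∈ {M | M ⊆ T ∧ M.Pairwise (fun a b => a ⊓ b = 0)} :=
    ⟨Set.insert_subset ht hM.prop.1, Set.pairwise_insert.mpr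
      ⟨hM.prop.2, fun m hm _ => ⟨hdisj m hm, inf_comm m t ▸ hdisj m hm⟩⟩⟩
  have htM : t ∈ M := hM.eq_of_ge hins (Set.subset_insert t M) ▸ Set.mem_insert t M
  exact ht0 (by simpa using hdisj t htM)

lemma isLUB_inf_nsmul_nonneg {α : Type*} [Lattice α] [AddCommGroup α] {u s p : α}
    (hp : IsLUB (Set.range fun n : ℕ => u ⊓ n • s) p) (hu : 0 ≤ u) : 0 ≤ p := by
  simpa [inf_of_le_right hu] using hp.1 ⟨0, rfl⟩

section DedekindComplete

variable {α : Type*} [Lattice α] [AddCommGroup α] [AddLeftMono α]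

/-- The Riesz component of `u` in the principal band generated by `s`. -/
lemma DedekindComplete.exists_isLUB_inf_nsmul (hα : DedekindComplete α) (u : α) {s : α}
    (hs : 0 ≤ s) :
    ∃ p, IsLUB (Set.range fun n : ℕ => u ⊓ n • s) p ∧ (u - p) ⊓ s = 0 := by
  obtain ⟨p, hp⟩ := hα _ (Set.range_nonempty fun n : ℕ => u ⊓ n • s)
    ⟨u, Set.forall_mem_range.mpr fun _ => inf_le_left⟩
  refine ⟨p, hp, ?_⟩
  set t := (u - p) ⊓ s
  have hpu : p ≤ u := hp.2 (Set.forall_mem_range.mpr fun _ => inf_le_left)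
  have hstep : ∀ n : ℕ, u ⊓ n • s ≤ p - t := fun n => by
    refine le_sub_iff_add_le.mpr (le_trans (le_inf ?_ ?_) (hp.1 ⟨n + 1, rfl⟩))
    · have ht : t ≤ u - u ⊓ n • s :=
        inf_le_left.trans (sub_le_sub_left (hp.1 ⟨n, rfl⟩) u)
      calc u ⊓ n • s + t ≤ u ⊓ n • s + (u - u ⊓ n • s) := add_le_add_right ht _
        _ = u := add_sub_cancel _ _
    · rw [succ_nsmul]
      exact add_le_add inf_le_right inf_le_right
  exact le_antisymm ((le_sub_self_iff p).mp (hp.2 (Set.forall_mem_range.mpr hstep)))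
    (le_inf (sub_nonneg.mpr hpu) hs)

lemma inf_eq_zero_of_isLUB_inf_nsmul {u s v p : α}
    (hp : IsLUB (Set.range fun n : ℕ => u ⊓ n • s) p) (hu : 0 ≤ u) (hs : 0 ≤ s)
    (hv : 0 ≤ v) (hsv : s ⊓ v = 0) : p ⊓ v = 0 :=
  inf_eq_zero_of_isLUB hp (isLUB_inf_nsmul_nonneg hp hu) hv <| Set.forall_mem_range.mpr fun n =>
    inf_eq_zero_of_le (le_inf hu (nsmul_nonneg hs n)) hv inf_le_right
      (nsmul_inf_eq_zero hs hv hsv n)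

lemma DedekindComplete.exists_isGreatest_disjoint (hα : DedekindComplete α) {w : α}
    (hw : 0 ≤ w) {G : Set α} (hG : ∀ g ∈ G, 0 ≤ g) :
    ∃ r, IsGreatest {c | 0 ≤ c ∧ c ≤ w ∧ ∀ g ∈ G, c ⊓ g = 0} r := by
  have hzero : (0 : α) ∈ {c | 0 ≤ c ∧ c ≤ w ∧ ∀ g ∈ G, c ⊓ g = 0} :=
    ⟨le_rfl, hw, fun g hg => inf_of_le_left (hG g hg)⟩
  obtain ⟨r, hr⟩ := hα _ ⟨0, hzero⟩ ⟨w, fun c hc => hc.2.1⟩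
  have hr0 : 0 ≤ r := hr.1 hzero
  exact ⟨r, ⟨hr0, hr.2 fun c hc => hc.2.1,
    fun g hg => inf_eq_zero_of_isLUB hr hr0 (hG g hg) fun c hc => hc.2.2 g hg⟩, hr.1⟩

variable {Γ : Type*} [Preorder Γ] [IsDirected Γ (· ≤ ·)] {d : Γ → α}

lemma IsLUB.sub_inf_eq_zero {u : α} (hd : IsLUB (Set.range d) u) (hmono : Monotone d)
    {c : α} (hc : 0 ≤ c) {γ : Γ} (hinc : ∀ γ', γ ≤ γ' → c ⊓ (d γ' - d γ) = 0) :
    (u - d γ) ⊓ c = 0 := by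
  set t := (u - d γ) ⊓ c
  have ht : 0 ≤ t := le_inf (sub_nonneg.mpr (hd.1 ⟨γ, rfl⟩)) hc
  have hle : ∀ γ', γ ≤ γ' → d γ' ≤ u - t := fun γ' hγ' => by
    have he : 0 ≤ d γ' - d γ := sub_nonneg.mpr (hmono hγ')
    have hsum : t + (d γ' - d γ) ≤ u - d γ :=
      add_le_of_inf_eq_zero (inf_eq_zero_of_le ht he inf_le_right (hinc γ' hγ')) inf_le_left
        (sub_le_sub_right (hd.1 ⟨γ', rfl⟩) _)
    rw [le_sub_iff_add_le] at hsum ⊢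
    calc d γ' + t = t + (d γ' - d γ) + d γ := by abel
      _ ≤ u := hsum
  have hu : u ≤ u - t := hd.2 <| Set.forall_mem_range.mpr fun γ₀ => by
    obtain ⟨γ', h₀, h⟩ := directed_of (· ≤ ·) γ₀ γ
    exact (hmono h₀).trans (hle γ' h)
  exact le_antisymm ((le_sub_self_iff u).mp hu) ht

lemma inf_nsmul_le_of_disjoint_increments (hmono : Monotone d)
    (hdisj : ∀ γ γ', γ ≤ γ' → d γ ⊓ (d γ' - d γ) = 0) {m : α} {γ₀ : Γ}
    (hm : 0 ≤ m) (hmγ₀ : m ≤ d γ₀) (γ : Γ) (n : ℕ) :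
    d γ ⊓ n • m ≤ d γ₀ ⊓ n • m := by
  obtain ⟨γ', hγ, hγ₀⟩ := directed_of (· ≤ ·) γ γ₀
  have he : 0 ≤ d γ' - d γ₀ := sub_nonneg.mpr (hmono hγ₀)
  have hme : (n • m) ⊓ (d γ' - d γ₀) = 0 :=
    nsmul_inf_eq_zero hm he (inf_eq_zero_of_le hm he hmγ₀ (hdisj γ₀ γ' hγ₀)) n
  calc d γ ⊓ n • m ≤ (d γ₀ + (d γ' - d γ₀)) ⊓ n • m := by
        rw [add_sub_cancel]; exact inf_le_inf_right _ (hmono hγ)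
    _ ≤ d γ₀ ⊓ n • m + (d γ' - d γ₀) ⊓ n • m :=
        add_inf_le_inf_add_inf ((hm.trans hmγ₀)) he (nsmul_nonneg hm n)
    _ = d γ₀ ⊓ n • m := by rw [inf_comm (d γ' - d γ₀), hme, add_zero]

lemma exists_isLUB_of_disjoint_increments [Nonempty Γ] (hded : DedekindComplete α)
    (hlat : LaterallyComplete α) (hmono : Monotone d) (h0 : ∀ γ, 0 ≤ d γ)
    (hdisj : ∀ γ γ', γ ≤ γ' → d γ ⊓ (d γ' - d γ) = 0) :
    ∃ σ, IsLUB (Set.range d) σ := by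
  obtain ⟨M, hMT, hMpair, hMmax⟩ :=
    exists_maximal_pairwise_inf_eq_zero {t : α | 0 ≤ t ∧ ∃ γ, t ≤ d γ}
  choose γm hγm using fun m : M => (hMT m.2).2
  have hm0 : ∀ m : M, 0 ≤ (m : α) := fun m => (hMT m.2).1
  choose p hp using fun m : M =>
    (hded.exists_isLUB_inf_nsmul (d (γm m)) (hm0 m)).imp fun _ => And.left
  have hp0 : ∀ m, 0 ≤ p m := fun m => isLUB_inf_nsmul_nonneg (hp m) (h0 _)
  have hpdisj : ∀ m m' : M, m ≠ m' → p m ⊓ p m' = 0 := fun m m' hne => by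
    have hmm' : (m : α) ⊓ m' = 0 := hMpair m.2 m'.2 (Subtype.coe_ne_coe.mpr hne)
    have hpm' := inf_eq_zero_of_isLUB_inf_nsmul (hp m) (h0 _) (hm0 m) (hm0 m') hmm'
    rw [inf_comm] at hpm' ⊢
    exact inf_eq_zero_of_isLUB_inf_nsmul (hp m') (h0 _) (hm0 m') (hp0 m) hpm'
  obtain ⟨σ, hσ⟩ := hlat (insert 0 (Set.range p))
    (Set.forall_mem_insert.mpr ⟨le_rfl, Set.forall_mem_range.mpr hp0⟩) <| by
      refine Set.pairwise_insert.mpr ⟨?_, ?_⟩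
      · rintro _ ⟨m, rfl⟩ _ ⟨m', rfl⟩ hne
        exact hpdisj m m' fun h => hne (congrArg p h)
      · rintro _ ⟨m, rfl⟩ -
        exact ⟨inf_of_le_left (hp0 m), inf_of_le_right (hp0 m)⟩
  have hσ0 : 0 ≤ σ := hσ.1 (Set.mem_insert 0 _)
  refine ⟨σ, Set.forall_mem_range.mpr fun γ => ?_, fun c hc => hσ.2 ?_⟩
  · have hcomp : ∀ m : M, ∀ n : ℕ, d γ ⊓ n • (m : α) ≤ σ := fun m n =>
      (inf_nsmul_le_of_disjoint_increments hmono hdisj (hm0 m) (hγm m) γ n).trans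
        (((hp m).1 ⟨n, rfl⟩).trans (hσ.1 (Set.mem_insert_of_mem 0 ⟨m, rfl⟩)))
    -- The part of `d γ` outside `σ` is disjoint from every `m ∈ M`, so it vanishes by
    -- maximality of `M`.
    set t := d γ - d γ ⊓ σ
    have ht : 0 ≤ t := sub_nonneg.mpr inf_le_left
    have htM : ∀ m ∈ M, t ⊓ m = 0 := fun m hm => by
      obtain ⟨q, hq, hqd⟩ := hded.exists_isLUB_inf_nsmul (d γ) (hm0 ⟨m, hm⟩)
      have hqσ : q ≤ d γ ⊓ σ :=
        hq.2 (Set.forall_mem_range.mpr fun n => le_inf inf_le_left (hcomp ⟨m, hm⟩ n))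
      exact inf_eq_zero_of_le ht (hm0 ⟨m, hm⟩) (sub_le_sub_left hqσ _) hqd
    have ht0 : t = 0 := by
      by_contra htne
      obtain ⟨m, hm, htm⟩ := hMmax t ⟨ht, γ, sub_le_self _ (le_inf (h0 γ) hσ0)⟩ htne
      exact htm (htM m hm)
    exact (sub_eq_zero.mp ht0).trans_le inf_le_right
  · obtain ⟨γ₀⟩ := ‹Nonempty Γ›
    refine Set.forall_mem_insert.mpr ⟨(h0 γ₀).trans (hc ⟨γ₀, rfl⟩), ?_⟩
    exact Set.forall_mem_range.mpr fun m => ((hp m).2 (Set.forall_mem_range.mpr fun _ =>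
      inf_le_left)).trans (hc ⟨γm m, rfl⟩)

end DedekindComplete

namespace IsBandProjection

lemma nonneg {E : Type*} [Lattice E] [AddCommGroup E] [Module ℝ E] {P : E →ₗ[ℝ] E}
    (hP : IsBandProjection P) {x : E} (hx : 0 ≤ x) : 0 ≤ P x :=
  (hP.2 x hx).1

lemma le_self {E : Type*} [Lattice E] [AddCommGroup E] [Module ℝ E] {P : E →ₗ[ℝ] E}
    (hP : IsBandProjection P) {x : E} (hx : 0 ≤ x) : P x ≤ x :=
  (hP.2 x hx).2

variable {E : Type*} [Lattice E] [AddCommGroup E] [Module ℝ E] [AddLeftMono E]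
  {P Q : E →ₗ[ℝ] E}

lemma monotone (hP : IsBandProjection P) : Monotone P := fun a b h => by
  simpa using hP.nonneg (sub_nonneg.mpr h)

lemma abs_le (hP : IsBandProjection P) (v : E) : |P v| ≤ |v| :=
  sup_le ((hP.monotone (le_abs_self v)).trans (hP.le_self (abs_nonneg v)))
    (by simpa using (hP.monotone (neg_le_abs v)).trans (hP.le_self (abs_nonneg v)))

lemma inf_sub_eq_zero (hP : IsBandProjection P) {a b : E} (ha : 0 ≤ a) (hb : 0 ≤ b) :
    P a ⊓ (b - P b) = 0 := by
  set w := P a ⊓ (b - P b)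
  have hw : 0 ≤ w := le_inf (hP.nonneg ha) (sub_nonneg.mpr (hP.le_self hb))
  have hPw : P w = 0 := by
    refine le_antisymm ?_ (hP.nonneg hw)
    simpa [hP.1 b] using hP.monotone (inf_le_right : w ≤ b - P b)
  -- `I - P` is monotone and kills `P a ≥ w`.
  have h := hP.le_self (sub_nonneg.mpr (inf_le_left : w ≤ P a))
  rw [map_sub, hP.1 a, hPw, sub_zero, le_sub_self_iff] at h
  exact le_antisymm h hw

lemma map_posPart (hP : IsBandProjection P) (v : E) : P v⁺ = (P v)⁺ := by
  have hdisj : P v⁺ ⊓ P v⁻ = 0 :=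
    le_antisymm (posPart_inf_negPart_eq_zero v ▸
        inf_le_inf (hP.le_self (posPart_nonneg v)) (hP.le_self (negPart_nonneg v)))
      (le_inf (hP.nonneg (posPart_nonneg v)) (hP.nonneg (negPart_nonneg v)))
  rw [← posPart_sub_negPart v, map_sub, posPart_sub_of_inf_eq_zero hdisj, posPart_sub_negPart]

lemma map_negPart (hP : IsBandProjection P) (v : E) : P v⁻ = (P v)⁻ := by
  rw [← posPart_neg, hP.map_posPart, map_neg, posPart_neg]

lemma comp_of_le (hP : IsBandProjection P) (hQ : IsBandProjection Q)
    (hPQ : ∀ z, 0 ≤ z → P z ≤ Q z) (u : E) : P (Q u) = P u := by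
  have key : ∀ z, 0 ≤ z → P (Q z) = P z := fun z hz => by
    have h := hP.monotone (sub_le_sub_left (hPQ z hz) z)
    simp only [map_sub, hP.1 z, sub_self, sub_nonpos] at h
    exact le_antisymm (hP.monotone (hQ.le_self hz)) h
  conv_lhs => rw [← posPart_sub_negPart u]
  rw [map_sub, map_sub, key _ (posPart_nonneg u), key _ (negPart_nonneg u), ← map_sub,
    posPart_sub_negPart]

lemma abs_sub_inf_map_eq_zero (hP : IsBandProjection P) (v : E) {z : E} (hz : 0 ≤ z) :
    |v - P v| ⊓ P z = 0 := by
  have hsplit : v - P v = (v⁺ - P v⁺) - (v⁻ - P v⁻) := by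
    conv_lhs => rw [← posPart_sub_negPart v, map_sub]
    abel
  rw [hsplit]
  refine _root_.abs_sub_inf_eq_zero (hP.nonneg hz) ?_ ?_
  · rw [abs_of_nonneg (sub_nonneg.mpr (hP.le_self (posPart_nonneg v))), inf_comm]
    exact hP.inf_sub_eq_zero hz (posPart_nonneg v)
  · rw [abs_of_nonneg (sub_nonneg.mpr (hP.le_self (negPart_nonneg v))), inf_comm]
    exact hP.inf_sub_eq_zero hz (negPart_nonneg v)

end IsBandProjection

section Embedding

variable {E F G : Type*} [Lattice E] [Lattice F] [FunLike G E F] {i : G}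

lemma monotone_of_map_sup (hi_sup : ∀ x y : E, i (x ⊔ y) = i x ⊔ i y) : Monotone i :=
  fun a b h => by
    have hab := hi_sup a b
    rw [sup_eq_right.mpr h] at hab
    exact hab ▸ le_sup_left

variable [AddCommGroup E] [AddCommGroup F] [AddMonoidHomClass G E F]

lemma map_nonneg_of_map_sup (hi_sup : ∀ x y : E, i (x ⊔ y) = i x ⊔ i y) {a : E}
    (ha : 0 ≤ a) : 0 ≤ i a := by
  simpa using monotone_of_map_sup hi_sup ha

lemma map_abs_of_map_sup (hi_sup : ∀ x y : E, i (x ⊔ y) = i x ⊔ i y) (a : E) :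
    i |a| = |i a| := by
  rw [abs, hi_sup, map_neg, abs]

lemma map_posPart_of_map_sup (hi_sup : ∀ x y : E, i (x ⊔ y) = i x ⊔ i y) (a : E) :
    i a⁺ = (i a)⁺ := by
  rw [posPart_def, hi_sup, map_zero, posPart_def]

lemma eq_zero_of_forall_inf_map_eq_zero (hi_sup : ∀ x y : E, i (x ⊔ y) = i x ⊔ i y)
    (hi_dense : ∀ w : F, 0 < w → ∃ z : E, 0 < i z ∧ i z ≤ w) {w : F} (hw : 0 ≤ w)
    (h : ∀ z, 0 ≤ z → w ⊓ i z = 0) : w = 0 := by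
  by_contra hne
  obtain ⟨z, hz, hzw⟩ := hi_dense w (hw.lt_of_ne' hne)
  have hzpos : i z⁺ = i z := by rw [map_posPart_of_map_sup hi_sup, posPart_eq_self.mpr hz.le]
  have := h z⁺ (posPart_nonneg z)
  rw [hzpos, inf_of_le_right hzw] at this
  exact hz.ne' this

variable [AddLeftMono E] [AddLeftMono F]

lemma map_inf_of_map_sup (hi_sup : ∀ x y : E, i (x ⊔ y) = i x ⊔ i y) (a b : E) :
    i (a ⊓ b) = i a ⊓ i b := by
  rw [← neg_neg (a ⊓ b), neg_inf, map_neg, hi_sup, map_neg, map_neg, neg_sup, neg_neg, neg_neg]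

lemma le_of_map_le_of_map_sup (hi_inj : Function.Injective i)
    (hi_sup : ∀ x y : E, i (x ⊔ y) = i x ⊔ i y) {a b : E} (h : i a ≤ i b) : a ≤ b := by
  have h0 : i (a - b)⁺ = i 0 := by
    rw [map_posPart_of_map_sup hi_sup, map_sub, map_zero, posPart_eq_zero, sub_nonpos]
    exact h
  exact sub_nonpos.mp (posPart_eq_zero.mp (hi_inj h0))

lemma isLUB_image_of_ideal (hi_inj : Function.Injective i)
    (hi_sup : ∀ x y : E, i (x ⊔ y) = i x ⊔ i y)
    (hi_ideal : ∀ (x : E) (w : F), |w| ≤ |i x| → ∃ z : E, i z = w)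
    {S : Set E} (hS : S.Nonempty) {s : E} (h : IsLUB S s) : IsLUB (i '' S) (i s) := by
  refine ⟨(monotone_of_map_sup hi_sup).mem_upperBounds_image h.1, fun c hc => ?_⟩
  obtain ⟨v₀, hv₀⟩ := hS
  have hgap : ∀ v ∈ S, (i s - c)⁺ ≤ i (s - v) := fun v hv =>
    sup_le ((sub_le_sub_left (hc ⟨v, hv, rfl⟩) _).trans_eq (map_sub i s v).symm)
      (by simpa using monotone_of_map_sup hi_sup (sub_nonneg.mpr (h.1 hv)))
  obtain ⟨e, he⟩ := hi_ideal (s - v₀) (i s - c)⁺ <| by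
    rw [abs_of_nonneg (posPart_nonneg _),
      abs_of_nonneg ((posPart_nonneg _).trans (hgap v₀ hv₀))]
    exact hgap v₀ hv₀
  have he0 : 0 ≤ e := le_of_map_le_of_map_sup hi_inj hi_sup (by simp [he])
  have hse : s ≤ s - e := h.2 fun v hv =>
    le_sub_comm.mp (le_of_map_le_of_map_sup hi_inj hi_sup (he ▸ hgap v hv))
  have he_eq : e = 0 := le_antisymm ((le_sub_self_iff s).mp hse) he0
  rw [he_eq, map_zero, eq_comm, posPart_eq_zero, sub_nonpos] at he
  exact he

lemma isGLB_image_of_ideal (hi_inj : Function.Injective i)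
    (hi_sup : ∀ x y : E, i (x ⊔ y) = i x ⊔ i y)
    (hi_ideal : ∀ (x : E) (w : F), |w| ≤ |i x| → ∃ z : E, i z = w)
    {S : Set E} (hS : S.Nonempty) {s : E} (h : IsGLB S s) : IsGLB (i '' S) (i s) := by
  have hneg := isLUB_image_of_ideal hi_inj hi_sup hi_ideal hS.neg h.neg
  have himage : i '' (-S) = -(i '' S) := by
    ext y
    constructor
    · rintro ⟨x, hx, rfl⟩
      exact ⟨-x, hx, map_neg i x⟩
    · rintro ⟨x, hx, hxy⟩
      exact ⟨-x, by simpa using hx, by rw [map_neg, hxy, neg_neg]⟩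
  rw [himage, map_neg] at hneg
  exact isLUB_neg'.mp hneg

end Embedding

def eventualUpperBounds {ι α : Type*} [Preorder ι] [Preorder α] (f : ι → α) : Set α :=
  {c | ∃ a₀, ∀ a, a₀ ≤ a → f a ≤ c}

section OrderConvergence

variable {E : Type u} [Lattice E] [AddCommGroup E] {A : Type*} [Preorder A] {x : A → E} {l : E}

lemma OrderConvNet.map_of_abs_le {G : Type*} [FunLike G E E] [AddMonoidHomClass G E E] {Q : G}
    (hQ : ∀ v, |Q v| ≤ |v|) (h : OrderConvNet x l) :
    OrderConvNet (fun a => Q (x a)) (Q l) := by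
  obtain ⟨B, leB, y, hB, hrefl, htrans, hdir, hanti, hglb, hbound⟩ := h
  refine ⟨B, leB, y, hB, hrefl, htrans, hdir, hanti, hglb, fun b => ?_⟩
  obtain ⟨a₀, ha₀⟩ := hbound b
  exact ⟨a₀, fun a ha => by simpa only [map_sub] using (hQ _).trans (ha₀ a ha)⟩

variable [AddLeftMono E]

lemma zero_mem_lowerBounds_eventualUpperBounds_abs :
    0 ∈ lowerBounds (eventualUpperBounds fun a => |x a - l|) :=
  fun _ ⟨a₀, hc⟩ => (abs_nonneg _).trans (hc a₀ le_rfl)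

lemma orderConvNet_iff [IsDirected A (· ≤ ·)] : OrderConvNet x l ↔
    (eventualUpperBounds fun a => |x a - l|).Nonempty ∧
      IsGLB (eventualUpperBounds fun a => |x a - l|) 0 := by
  constructor
  · rintro ⟨B, -, y, ⟨b₀⟩, -, -, -, -, hy, hbound⟩
    refine ⟨⟨y b₀, hbound b₀⟩, zero_mem_lowerBounds_eventualUpperBounds_abs,
      fun m hm => hy.2 ?_⟩
    rintro _ ⟨b, rfl⟩
    exact hm (hbound b)
  · rintro ⟨⟨c₀, hc₀⟩, hglb⟩
    refine ⟨eventualUpperBounds fun a => |x a - l|, fun c c' => (c' : E) ≤ c, (↑),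
      ⟨⟨c₀, hc₀⟩⟩, fun _ => le_rfl, fun _ _ _ h₁ h₂ => h₂.trans h₁, ?_,
      fun _ _ h => h, by rwa [Subtype.range_coe], fun c => c.2⟩
    rintro ⟨c₁, a₁, h₁⟩ ⟨c₂, a₂, h₂⟩
    obtain ⟨a₃, h₁₃, h₂₃⟩ := directed_of (· ≤ ·) a₁ a₂
    exact ⟨⟨c₁ ⊓ c₂, a₃, fun a ha => le_inf (h₁ a (h₁₃.trans ha)) (h₂ a (h₂₃.trans ha))⟩,
      inf_le_left, inf_le_right⟩

lemma OrderConvNet.unique [IsDirected A (· ≤ ·)] {l₁ l₂ : E} (h₁ : OrderConvNet x l₁)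
    (h₂ : OrderConvNet x l₂) : l₁ = l₂ := by
  have htri : ∀ c₁ ∈ eventualUpperBounds fun a => |x a - l₁|,
      ∀ c₂ ∈ eventualUpperBounds fun a => |x a - l₂|, |l₁ - l₂| ≤ c₁ + c₂ := by
    rintro c₁ ⟨a₁, hc₁⟩ c₂ ⟨a₂, hc₂⟩
    obtain ⟨a, h₁, h₂⟩ := directed_of (· ≤ ·) a₁ a₂
    calc |l₁ - l₂| = |(x a - l₂) - (x a - l₁)| := by congr 1; abel
      _ ≤ |x a - l₂| + |x a - l₁| := abs_sub_le_abs_add_abs _ _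
      _ ≤ c₁ + c₂ := add_comm c₁ c₂ ▸ add_le_add (hc₂ a h₂) (hc₁ a h₁)
  have hle : |l₁ - l₂| ≤ 0 := (orderConvNet_iff.mp h₂).2.2 fun c₂ hc₂ =>
    sub_nonpos.mp <| (orderConvNet_iff.mp h₁).2.2 fun c₁ hc₁ =>
      sub_le_iff_le_add.mpr (htri c₁ hc₁ c₂ hc₂)
  exact sub_eq_zero.mp (eq_zero_of_abs_nonpos hle)

lemma OrderConvNet.map_of_ideal {F : Type u} {G : Type*} [Lattice F] [AddCommGroup F]
    [AddLeftMono F] [FunLike G E F] [AddMonoidHomClass G E F] {i : G}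
    (hi_inj : Function.Injective i)
    (hi_sup : ∀ x y : E, i (x ⊔ y) = i x ⊔ i y)
    (hi_ideal : ∀ (x : E) (w : F), |w| ≤ |i x| → ∃ z : E, i z = w) (h : OrderConvNet x l) :
    OrderConvNet (fun a => i (x a)) (i l) := by
  obtain ⟨B, leB, y, ⟨b₀⟩, hrefl, htrans, hdir, hanti, hglb, hbound⟩ := h
  refine ⟨B, leB, fun b => i (y b), ⟨b₀⟩, hrefl, htrans, hdir,
    fun b₁ b₂ h => monotone_of_map_sup hi_sup (hanti b₁ b₂ h), ?_, fun b => ?_⟩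
  · have himage := isGLB_image_of_ideal hi_inj hi_sup hi_ideal
      (Set.range_nonempty_iff_nonempty.mpr ⟨b₀⟩) hglb
    rwa [← Set.range_comp, map_zero] at himage
  · obtain ⟨a₀, ha₀⟩ := hbound b
    refine ⟨a₀, fun a ha => ?_⟩
    rw [← map_sub, ← map_abs_of_map_sup hi_sup]
    exact monotone_of_map_sup hi_sup (ha₀ a ha)

lemma compatible_of_orderConvNet [IsDirected A (· ≤ ·)] [Module ℝ E] {Γ : Type*} [Preorder Γ]
    {P : Γ → E →ₗ[ℝ] E} (hP : ∀ γ, IsBandProjection (P γ))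
    (hP_mono : ∀ γ γ' : Γ, γ ≤ γ' → ∀ x : E, 0 ≤ x → P γ x ≤ P γ' x) {l : Γ → E}
    (hl : ∀ γ, OrderConvNet (fun a => P γ (x a)) (l γ)) (γ γ' : Γ) (hγ : γ ≤ γ') :
    P γ (l γ') = l γ := by
  refine OrderConvNet.unique ?_ (hl γ)
  simpa only [(hP γ).comp_of_le (hP γ') (hP_mono γ γ' hγ)] using
    (hl γ').map_of_abs_le (hP γ).abs_le

end OrderConvergence

section Gluing

variable {E F G : Type*} [Lattice E] [AddCommGroup E] [Module ℝ E] [AddLeftMono E]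
  [Lattice F] [AddCommGroup F] [AddLeftMono F] [FunLike G E F] [AddMonoidHomClass G E F]
  {i : G} {Γ : Type*} [Nonempty Γ]
  {P : Γ → E →ₗ[ℝ] E} {l : Γ → E}

lemma abs_sub_inf_le_abs_sub_add (hi_sup : ∀ x y : E, i (x ⊔ y) = i x ⊔ i y) {Q : E →ₗ[ℝ] E}
    (hQ : IsBandProjection Q) {v l : E} {y w r : F} (hw : 0 ≤ w)
    (hy : ∀ z, 0 ≤ z → |y - i l| ⊓ i (Q z) = 0)
    (hr : IsGreatest {c | 0 ≤ c ∧ c ≤ w ∧ ∀ g ∈ (fun z => i (Q z)) '' Set.Ici 0, c ⊓ g = 0} r) :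
    |i v - y| ⊓ w ≤ |i (Q v) - i l| + r := by
  set s := i (v - Q v) - (y - i l)
  have hs : ∀ z, 0 ≤ z → |s| ⊓ i (Q z) = 0 := fun z hz =>
    abs_sub_inf_eq_zero (map_nonneg_of_map_sup hi_sup (hQ.nonneg hz))
      (by rw [← map_abs_of_map_sup hi_sup, ← map_inf_of_map_sup hi_sup,
        hQ.abs_sub_inf_map_eq_zero v hz, map_zero]) (hy z hz)
  have hsr : |s| ⊓ w ≤ r := hr.2 ⟨le_inf (abs_nonneg _) hw, inf_le_right,
    Set.forall_mem_image.mpr fun z hz => inf_eq_zero_of_le (le_inf (abs_nonneg _) hw)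
      (map_nonneg_of_map_sup hi_sup (hQ.nonneg hz)) inf_le_left (hs z hz)⟩
  calc |i v - y| ⊓ w = |(i (Q v) - i l) + s| ⊓ w := by
        congr 2; simp only [s, map_sub]; abel
    _ ≤ (|i (Q v) - i l| + |s|) ⊓ w := inf_le_inf_right w (abs_add_le _ _)
    _ ≤ |i (Q v) - i l| ⊓ w + |s| ⊓ w :=
        add_inf_le_inf_add_inf (abs_nonneg _) (abs_nonneg _) hw
    _ ≤ |i (Q v) - i l| + r := add_le_add inf_le_left hsr

lemma eq_zero_of_forall_inf_map_eq_zero_of_isLUB (hi_inj : Function.Injective i)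
    (hi_sup : ∀ x y : E, i (x ⊔ y) = i x ⊔ i y)
    (hi_ideal : ∀ (x : E) (w : F), |w| ≤ |i x| → ∃ z : E, i z = w)
    (hi_dense : ∀ w : F, 0 < w → ∃ z : E, 0 < i z ∧ i z ≤ w)
    (hP_sup : ∀ x : E, 0 ≤ x → IsLUB (Set.range fun γ => P γ x) x) {c : F} (hc : 0 ≤ c)
    (h : ∀ γ z, 0 ≤ z → c ⊓ i (P γ z) = 0) : c = 0 := by
  refine eq_zero_of_forall_inf_map_eq_zero hi_sup hi_dense hc fun z hz => ?_
  have hlub := isLUB_image_of_ideal hi_inj hi_sup hi_ideal (Set.range_nonempty _) (hP_sup z hz)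
  rw [← Set.range_comp] at hlub
  rw [inf_comm]
  refine inf_eq_zero_of_isLUB hlub (map_nonneg_of_map_sup hi_sup hz) hc ?_
  exact Set.forall_mem_range.mpr fun γ => by rw [inf_comm]; exact h γ z hz

variable [Preorder Γ] [IsDirected Γ (· ≤ ·)]

lemma exists_le_sub_inf_eq_zero_of_compatible_of_nonneg (hded : DedekindComplete F)
    (hlat : LaterallyComplete F) (hi_sup : ∀ x y : E, i (x ⊔ y) = i x ⊔ i y)
    (hP : ∀ γ, IsBandProjection (P γ)) (hl : ∀ γ γ', γ ≤ γ' → P γ (l γ') = l γ)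
    (hl0 : ∀ γ, 0 ≤ l γ) :
    ∃ u : F, ∀ γ, i (l γ) ≤ u ∧ ∀ z, 0 ≤ z → (u - i (l γ)) ⊓ i (P γ z) = 0 := by
  have hinc : ∀ γ γ', γ ≤ γ' → ∀ z, 0 ≤ z →
      i (P γ z) ⊓ (i (l γ') - i (l γ)) = 0 := fun γ γ' h z hz => by
      rw [← hl γ γ' h, ← map_sub, ← map_inf_of_map_sup hi_sup,
        (hP γ).inf_sub_eq_zero hz (hl0 γ'), map_zero]
  have hmono : Monotone fun γ => i (l γ) := fun γ γ' h =>
    monotone_of_map_sup hi_sup (hl γ γ' h ▸ (hP γ).le_self (hl0 γ'))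
  obtain ⟨u, hu⟩ := exists_isLUB_of_disjoint_increments hded hlat hmono
    (fun γ => map_nonneg_of_map_sup hi_sup (hl0 γ)) fun γ γ' h => by
      simpa only [hl γ γ' h] using hinc γ γ' h (l γ') (hl0 γ')
  exact ⟨u, fun γ => ⟨hu.1 ⟨γ, rfl⟩, fun z hz => hu.sub_inf_eq_zero hmono
    (map_nonneg_of_map_sup hi_sup ((hP γ).nonneg hz)) fun γ' h => hinc γ γ' h z hz⟩⟩

lemma exists_abs_sub_inf_eq_zero_of_compatible (hded : DedekindComplete F)
    (hlat : LaterallyComplete F) (hi_sup : ∀ x y : E, i (x ⊔ y) = i x ⊔ i y)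
    (hP : ∀ γ, IsBandProjection (P γ)) (hl : ∀ γ γ', γ ≤ γ' → P γ (l γ') = l γ) :
    ∃ y : F, ∀ γ z, 0 ≤ z → |y - i (l γ)| ⊓ i (P γ z) = 0 := by
  obtain ⟨upos, hupos⟩ := exists_le_sub_inf_eq_zero_of_compatible_of_nonneg
    (l := fun γ => (l γ)⁺) hded hlat hi_sup hP
    (fun γ γ' h => by simp only [(hP γ).map_posPart, hl γ γ' h])
    fun γ => posPart_nonneg _
  obtain ⟨uneg, huneg⟩ := exists_le_sub_inf_eq_zero_of_compatible_of_nonneg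
    (l := fun γ => (l γ)⁻) hded hlat hi_sup hP
    (fun γ γ' h => by simp only [(hP γ).map_negPart, hl γ γ' h])
    fun γ => negPart_nonneg _
  refine ⟨upos - uneg, fun γ z hz => ?_⟩
  have hsplit : upos - uneg - i (l γ) = (upos - i (l γ)⁺) - (uneg - i (l γ)⁻) := by
    conv_lhs => rw [← posPart_sub_negPart (l γ), map_sub]
    abel
  rw [hsplit]
  refine abs_sub_inf_eq_zero (map_nonneg_of_map_sup hi_sup ((hP γ).nonneg hz)) ?_ ?_
  · rw [abs_of_nonneg (sub_nonneg.mpr (hupos γ).1)]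
    exact (hupos γ).2 z hz
  · rw [abs_of_nonneg (sub_nonneg.mpr (huneg γ).1)]
    exact (huneg γ).2 z hz

end Gluing

theorem uo_convergence_from_net_of_band_projections_general
    {E : Type u} [Lattice E] [AddCommGroup E] [Module ℝ E]
    [CovariantClass E E (· + ·) (· ≤ ·)]
    {F : Type u} [Lattice F] [AddCommGroup F] [Module ℝ F]
    [CovariantClass F F (· + ·) (· ≤ ·)]
    {Γ : Type*} [Preorder Γ] [IsDirected Γ (· ≤ ·)] [Nonempty Γ]
    {A : Type*} [Preorder A] [IsDirected A (· ≤ ·)]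
    (hFded : DedekindComplete F) (hFlat : LaterallyComplete F)
    (i : E →ₗ[ℝ] F)
    (hi_inj : Function.Injective i)
    (hi_sup : ∀ x y : E, i (x ⊔ y) = i x ⊔ i y)
    (hi_ideal : ∀ (x : E) (w : F), |w| ≤ |i x| → ∃ z : E, i z = w)
    (hi_dense : ∀ w : F, 0 < w → ∃ z : E, 0 < i z ∧ i z ≤ w)
    (P : Γ → E →ₗ[ℝ] E)
    (hP : ∀ γ, IsBandProjection (P γ))
    (hP_mono : ∀ γ γ' : Γ, γ ≤ γ' → ∀ x : E, 0 ≤ x → P γ x ≤ P γ' x)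
    (hP_sup : ∀ x : E, 0 ≤ x → IsLUB (Set.range fun γ => P γ x) x)
    (x : A → E)
    (hconv : ∀ γ, ∃ l : E, OrderConvNet (fun a => P γ (x a)) l) :
    ∃ y : F, UoConvNet (fun a => i (x a)) y := by
  choose l hl using hconv
  obtain ⟨y, hy⟩ := exists_abs_sub_inf_eq_zero_of_compatible hFded hFlat hi_sup hP
    (compatible_of_orderConvNet hP hP_mono hl)
  refine ⟨y, fun w hw => orderConvNet_iff.mpr ?_⟩
  choose r hr using fun γ => hFded.exists_isGreatest_disjoint hw
    (G := (fun z => i (P γ z)) '' Set.Ici 0)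
    (Set.forall_mem_image.mpr fun z hz => map_nonneg_of_map_sup hi_sup ((hP γ).nonneg hz))
  have hlF := fun γ => orderConvNet_iff.mp ((hl γ).map_of_ideal hi_inj hi_sup hi_ideal)
  have hbound : ∀ γ, ∀ c ∈ eventualUpperBounds fun a => |i (P γ (x a)) - i (l γ)|,
      c + r γ ∈ eventualUpperBounds fun a => |(|i (x a) - y| ⊓ w) - 0| :=
    fun γ c ⟨a₀, hc⟩ => ⟨a₀, fun a ha => by
      beta_reduce
      rw [sub_zero, abs_of_nonneg (le_inf (abs_nonneg _) hw)]
      exact (abs_sub_inf_le_abs_sub_add hi_sup (hP γ) hw (hy γ) (hr γ)).trans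
        (add_le_add (hc a ha) le_rfl)⟩
  obtain ⟨γ₀⟩ := ‹Nonempty Γ›
  obtain ⟨c₀, hc₀⟩ := (hlF γ₀).1
  refine ⟨⟨_, hbound γ₀ c₀ hc₀⟩, zero_mem_lowerBounds_eventualUpperBounds_abs,
    fun m hm => ?_⟩
  have hmr : ∀ γ, m ≤ r γ := fun γ => sub_nonpos.mp <|
    (hlF γ).2.2 fun c hc => sub_le_iff_le_add.mpr (hm (hbound γ c hc))
  refine posPart_eq_zero.mp <| eq_zero_of_forall_inf_map_eq_zero_of_isLUB hi_inj hi_sup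
    hi_ideal hi_dense hP_sup (posPart_nonneg m) fun γ z hz =>
      inf_eq_zero_of_le (posPart_nonneg m) (map_nonneg_of_map_sup hi_sup ((hP γ).nonneg hz))
        (sup_le (hmr γ) (hr γ).1.1) ((hr γ).1.2.2 _ ⟨z, hz, rfl⟩)

/-- Theorem. Let `E` be a Dedekind complete vector lattice, `F` a universal completion of
`E` (embedded via `i`), `(P_γ)_{γ ∈ Γ}` a net of band projections on `E` with `P_γ ↑ I`,
and `(x_α)_{α ∈ A}` a net in `E`.  If for each `γ` the net `(P_γ x_α)_α` is order
convergent in `E`, then `(x_α)` is uo-convergent in `F`. -/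
theorem uo_convergence_from_net_of_band_projections
    {E : Type u} [Lattice E] [AddCommGroup E] [Module ℝ E]
    [CovariantClass E E (· + ·) (· ≤ ·)]
    {F : Type u} [Lattice F] [AddCommGroup F] [Module ℝ F]
    [CovariantClass F F (· + ·) (· ≤ ·)]
    {Γ : Type*} [Preorder Γ] [IsDirected Γ (· ≤ ·)] [Nonempty Γ]
    {A : Type*} [Preorder A] [IsDirected A (· ≤ ·)] [Nonempty A]
    (hE : DedekindComplete E)
    (hFded : DedekindComplete F) (hFlat : LaterallyComplete F)
    (i : E →ₗ[ℝ] F)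
    (hi_inj : Function.Injective i)
    (hi_sup : ∀ x y : E, i (x ⊔ y) = i x ⊔ i y)
    (hi_ideal : ∀ (x : E) (w : F), |w| ≤ |i x| → ∃ z : E, i z = w)
    (hi_dense : ∀ w : F, 0 < w → ∃ z : E, 0 < i z ∧ i z ≤ w)
    (P : Γ → E →ₗ[ℝ] E)
    (hP : ∀ γ, IsBandProjection (P γ))
    (hP_mono : ∀ γ γ' : Γ, γ ≤ γ' → ∀ x : E, 0 ≤ x → P γ x ≤ P γ' x)
    (hP_sup : ∀ x : E, 0 ≤ x → IsLUB (Set.range fun γ => P γ x) x)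
    (x : A → E)
    (hconv : ∀ γ, ∃ l : E, OrderConvNet (fun a => P γ (x a)) l) :
    ∃ y : F, UoConvNet (fun a => i (x a)) y :=
  uo_convergence_from_net_of_band_projections_general hFded hFlat i hi_inj hi_sup hi_ideal hi_dense
    P hP hP_mono hP_sup x hconv
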